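/- For every c₁ > 1 there exists a constant c₂ > 1, depending only on c₁, such that for every choice of d, A, b, ν as in the context and every r > 0, c₂⁻¹ Φ(r) ≤ Φ(c₁ r) ≤ c₂ Φ(r). -/

import Mathlib

open MeasureTheory ProbabilityTheory Filter Set Topology Metric RealInnerProductSpace
open scoped ENNReal NNReal

noncomputable section

abbrev Euc (d : ℕ) : Type := EuclideanSpace ℝ (Fin d)

/-- First exit time from `B` of the process started at `x`, valued in `[0,∞]`
(`∞` if the process never leaves `B`). -/
def exitTime {Ω : Type} {d : ℕ} (Y : ℝ → Ω → Euc d) (x : Euc d) (B : Set (Euc d)) (ω : Ω) :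
    ℝ≥0∞ :=
  sInf (ENNReal.ofReal '' {t : ℝ | 0 ≤ t ∧ x + Y t ω ∉ B})

/-- `E_x[τ_B]`, the expected exit time from `B` for the process started at `x`. -/
def expExit {Ω : Type} [MeasurableSpace Ω] {d : ℕ} (P : Measure Ω) (Y : ℝ → Ω → Euc d)
    (x : Euc d) (B : Set (Euc d)) : ℝ≥0∞ :=
  ∫⁻ ω, exitTime Y x B ω ∂P

/-- `h(X_{τ_B})` on the event `{τ_B < ∞}` (and `0` elsewhere), as an `ℝ≥0∞`-valued quantity. -/
def stopVal {Ω : Type} {d : ℕ} (Y : ℝ → Ω → Euc d) (h : Euc d → ℝ) (x : Euc d)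
    (B : Set (Euc d)) (ω : Ω) : ℝ≥0∞ :=
  if exitTime Y x B ω < ⊤ then ENNReal.ofReal (h (x + Y (exitTime Y x B ω).toReal ω)) else 0

/-- `E_x[h(X_{τ_B})]` for a nonnegative `h`. -/
def expStop {Ω : Type} [MeasurableSpace Ω] {d : ℕ} (P : Measure Ω) (Y : ℝ → Ω → Euc d)
    (h : Euc d → ℝ) (x : Euc d) (B : Set (Euc d)) : ℝ≥0∞ :=
  ∫⁻ ω, stopVal Y h x B ω ∂P

/-- `h` is harmonic in the open set `U` with respect to the process `x + Y`. -/
def HarmonicOn {Ω : Type} [MeasurableSpace Ω] {d : ℕ} (P : Measure Ω) (Y : ℝ → Ω → Euc d)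
    (h : Euc d → ℝ) (U : Set (Euc d)) : Prop :=
  ∀ B : Set (Euc d), IsOpen B → IsCompact (closure B) → closure B ⊆ U → ∀ x ∈ B,
    expStop P Y h x B ≠ ⊤ ∧ ENNReal.ofReal (h x) = expStop P Y h x B

/-- `h` vanishes continuously on `E`: it is zero on `E` and continuous at every point of `E`. -/
def VanishesContinuouslyOn {d : ℕ} (h : Euc d → ℝ) (E : Set (Euc d)) : Prop :=
  (∀ z ∈ E, h z = 0) ∧ ∀ z ∈ E, ContinuousAt h z

/-- A Lévy-like process: starts at `0`, a.s. càdlàg paths,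
stationary and independent increments. -/
structure IsLevyLike {Ω : Type} [MeasurableSpace Ω] {d : ℕ} (P : Measure Ω)
    (Y : ℝ → Ω → Euc d) : Prop where
  isProb : IsProbabilityMeasure P
  meas : ∀ t : ℝ, Measurable (Y t)
  start : ∀ᵐ ω ∂P, Y 0 ω = 0
  rightCont : ∀ᵐ ω ∂P, ∀ t : ℝ, 0 ≤ t → ContinuousWithinAt (fun s => Y s ω) (Ici t) t
  leftLim : ∀ᵐ ω ∂P, ∀ t : ℝ, 0 < t → ∃ L, Tendsto (fun s => Y s ω) (𝓝[<] t) (𝓝 L)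
  statInc : ∀ s t : ℝ, 0 ≤ s → s ≤ t →
    P.map (fun ω => Y t ω - Y s ω) = P.map (fun ω => Y (t - s) ω)
  indInc : ∀ n : ℕ, ∀ τ : Fin (n + 1) → ℝ, Monotone τ → 0 ≤ τ 0 →
    iIndepFun
      (fun i : Fin n => fun ω => Y (τ i.succ) ω - Y (τ i.castSucc) ω) P

/-- The process `Y` has characteristic exponent `ψ`:
`E[exp(i⟪u, Y_t⟫)] = exp(t ψ(u))`. -/
def HasCharExponent {Ω : Type} [MeasurableSpace Ω] {d : ℕ} (P : Measure Ω)
    (Y : ℝ → Ω → Euc d) (ψ : Euc d → ℂ) : Prop :=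
  ∀ u : Euc d, ∀ t : ℝ, 0 ≤ t →
    ∫ ω, Complex.exp (Complex.I * (⟪u, Y t ω⟫ : ℂ)) ∂P = Complex.exp ((t : ℂ) * ψ u)

/-- Laplace exponent `φ(s) = s + ∫₀^∞ (1 - e^{-st}) μ(dt)` (unit drift). -/
def laplaceExp (μm : Measure ℝ) (s : ℝ) : ℝ :=
  s + ∫ t, (1 - Real.exp (-(s * t))) ∂μm

/-- `μm` is a nonzero Lévy measure of a subordinator: carried by `(0,∞)` and
`∫ (1 ∧ t) μ(dt) < ∞`. -/
def IsLevyMeasure1D (μm : Measure ℝ) : Prop :=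
  μm ≠ 0 ∧ μm (Iic 0) = 0 ∧ (∫⁻ t, ENNReal.ofReal (min 1 t) ∂μm) < ⊤

/-- `μm` has a density `ρ` w.r.t. Lebesgue measure with `ρ(t) ≤ c ρ(2t)` on `(0,8)` and
`ρ(t) ≤ c ρ(t+1)` on `(1,∞)`. -/
def HasGoodDensity (μm : Measure ℝ) : Prop :=
  ∃ ρ : ℝ → ℝ, Measurable ρ ∧ (∀ t, 0 ≤ ρ t) ∧
    μm = volume.withDensity (fun t => ENNReal.ofReal (ρ t)) ∧
    ∃ c : ℝ, 0 < c ∧ (∀ t ∈ Ioo (0 : ℝ) 8, ρ t ≤ c * ρ (2 * t)) ∧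
      ∀ t ∈ Ioi (1 : ℝ), ρ t ≤ c * ρ (t + 1)

/-- Subordinate Brownian motion with Gaussian component and Laplace exponent `φ`:
a Lévy-like process with `E[exp(i⟪u, Y_t⟫)] = exp(-t φ(|u|²))`. -/
def IsSubordinateBM {Ω : Type} [MeasurableSpace Ω] {d : ℕ} (P : Measure Ω)
    (Y : ℝ → Ω → Euc d) (φ : ℝ → ℝ) : Prop :=
  IsLevyLike P Y ∧ HasCharExponent P Y fun u => ((-(φ (‖u‖ ^ 2)) : ℝ) : ℂ)

/-- Identification of `ℝ^{d-1} × ℝ` with `ℝ^d` (the last coordinate being the real factor). -/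
def embedPair (d : ℕ) (p : EuclideanSpace ℝ (Fin (d - 1)) × ℝ) : Euc d :=
  (EuclideanSpace.equiv (Fin d) ℝ).symm fun i => if h : (i : ℕ) < d - 1 then p.1 ⟨i, h⟩ else p.2

/-- `D` is a Lipschitz domain with characteristics `(R₀, Λ₀)`. -/
def IsLipschitzDomain (d : ℕ) (D : Set (Euc d)) (R₀ Λ₀ : ℝ) : Prop :=
  IsOpen D ∧ IsConnected D ∧
    ∀ z ∈ frontier D, ∃ O : Euc d ≃ₗᵢ[ℝ] Euc d, ∃ ψ : EuclideanSpace ℝ (Fin (d - 1)) → ℝ,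
      LipschitzWith Λ₀.toNNReal ψ ∧ ψ 0 = 0 ∧
      ball z R₀ ∩ D =
        (fun p : EuclideanSpace ℝ (Fin (d - 1)) × ℝ => z + O (embedPair d p)) ''
          {p | ‖embedPair d p‖ < R₀ ∧ ψ p.1 < p.2}

/-- The last coordinate of a vector in `ℝ^d` (junk value `0` if `d = 0`). -/
def lastCoord {d : ℕ} (x : Euc d) : ℝ :=
  if h : 0 < d then x ⟨d - 1, Nat.sub_lt h Nat.one_pos⟩ else 0

/-- The truncated circular cone `Γ_θ(r)` with vertex `0`, angle `θ` and axis along the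
positive last-coordinate direction. -/
def cone (d : ℕ) (θ r : ℝ) : Set (Euc d) :=
  {x | ‖x‖ < r ∧ ‖x‖ * Real.cos θ < lastCoord x}

/-- `D` satisfies the interior cone condition with common angle `θ`. -/
def InteriorConeCondition (d : ℕ) (D : Set (Euc d)) (θ : ℝ) : Prop :=
  ∃ a₀ : ℝ, 0 < a₀ ∧ ∀ z ∈ frontier D, ∃ R : Euc d ≃ₗᵢ[ℝ] Euc d,
    LinearEquiv.det R.toLinearEquiv = 1 ∧ (fun y => z + R y) '' cone d θ a₀ ⊆ D


/-- `D` is a `C¹` domain (with a uniform modulus of continuity for the gradients of the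
local boundary functions). -/
def IsC1Domain (d : ℕ) (D : Set (Euc d)) : Prop :=
  IsOpen D ∧ IsConnected D ∧
    ∃ R₀ : ℝ, 0 < R₀ ∧ ∃ f : ℝ → ℝ, (∀ s, 0 ≤ f s) ∧ f 0 = 0 ∧
      Tendsto f (𝓝[>] 0) (𝓝 0) ∧
      ∀ z ∈ frontier D, ∃ O : Euc d ≃ₗᵢ[ℝ] Euc d, ∃ ψ : EuclideanSpace ℝ (Fin (d - 1)) → ℝ,
        ContDiff ℝ 1 ψ ∧ ψ 0 = 0 ∧ fderiv ℝ ψ 0 = 0 ∧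
        (∀ a b : EuclideanSpace ℝ (Fin (d - 1)), ‖fderiv ℝ ψ a - fderiv ℝ ψ b‖ ≤ f ‖a - b‖) ∧
        ball z R₀ ∩ D =
          (fun p : EuclideanSpace ℝ (Fin (d - 1)) × ℝ => z + O (embedPair d p)) ''
            {p | ‖embedPair d p‖ < R₀ ∧ ψ p.1 < p.2}

/-- The event that the process started at `x` leaves `B` in finite time and lands in `A`
at the exit time. -/
def exitEvent {Ω : Type} {d : ℕ} (Y : ℝ → Ω → Euc d) (x : Euc d) (B A : Set (Euc d)) :
    Set Ω :=
  {ω | exitTime Y x B ω < ⊤ ∧ x + Y (exitTime Y x B ω).toReal ω ∈ A}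

/-- The hitting time `inf { t > 0 : x + Y_t ∈ A }`, valued in `[0,∞]`. -/
def hitTime {Ω : Type} {d : ℕ} (Y : ℝ → Ω → Euc d) (x : Euc d) (A : Set (Euc d)) (ω : Ω) :
    ℝ≥0∞ :=
  sInf (ENNReal.ofReal '' {t : ℝ | 0 < t ∧ x + Y t ω ∈ A})

def quadForm (d : ℕ) (A : Matrix (Fin d) (Fin d) ℝ) (u : Euc d) : ℝ :=
  ∑ i, ∑ j, u i * A i j * u j

/-- `(A, b, ν)` is a Lévy triple: `A` symmetric nonnegative-definite, and
`ν` a measure on `ℝ^d ∖ {0}` with `∫ (|z|² ∧ 1) ν(dz) < ∞`. -/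
def IsLevyTriple (d : ℕ) (A : Matrix (Fin d) (Fin d) ℝ) (b : Euc d)
    (ν : Measure (Euc d)) : Prop :=
  A.IsSymm ∧ (∀ u : Euc d, 0 ≤ quadForm d A u) ∧ ν {0} = 0 ∧
    (∫⁻ z, ENNReal.ofReal (min (‖z‖ ^ 2) 1) ∂ν) < ⊤

/-- The Lévy–Khintchine exponent `ψ` of the triple `(A, b, ν)`. -/
def levyExponent (d : ℕ) (A : Matrix (Fin d) (Fin d) ℝ) (b : Euc d) (ν : Measure (Euc d))
    (u : Euc d) : ℂ :=
  -(1 / 2 : ℂ) * (quadForm d A u : ℂ) + Complex.I * (⟪b, u⟫ : ℂ) +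
    ∫ z, (Complex.exp (Complex.I * (⟪u, z⟫ : ℂ)) - 1 -
      (if ‖z‖ ≤ 1 then Complex.I * (⟪u, z⟫ : ℂ) else 0)) ∂ν

/-- The truncated drift `b̃_r`. -/
def btilde {d : ℕ} (b : Euc d) (ν : Measure (Euc d)) (r : ℝ) : Euc d :=
  if r ≤ 1 then b - ∫ z in {z : Euc d | r < ‖z‖ ∧ ‖z‖ ≤ 1}, z ∂ν
  else b + ∫ z in {z : Euc d | 1 < ‖z‖ ∧ ‖z‖ ≤ r}, z ∂ν

/-- Pruitt's function
`Φ(r) = r^{-2} ∑ a_{ii} + ∫ ((|z|²/r²) ∧ 1) ν(dz) + |b̃_r|/r`. -/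
def Phi (d : ℕ) (A : Matrix (Fin d) (Fin d) ℝ) (b : Euc d) (ν : Measure (Euc d))
    (r : ℝ) : ℝ :=
  (∑ i, A i i) / r ^ 2 + (∫ z, min (‖z‖ ^ 2 / r ^ 2) 1 ∂ν) + ‖btilde b ν r‖ / r

/-- The running maximum `M_t = sup_{0 ≤ s ≤ t} |Y_s|`. -/
def runMax {Ω : Type} {d : ℕ} (Y : ℝ → Ω → Euc d) (t : ℝ) (ω : Ω) : ℝ :=
  sSup {x : ℝ | ∃ s : ℝ, 0 ≤ s ∧ s ≤ t ∧ x = ‖Y s ω‖}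

/-- `Y` is a Lévy process with Lévy triple `(A, b, ν)`:
a Lévy-like process with characteristic exponent the Lévy–Khintchine exponent of `(A, b, ν)`. -/
def IsLevyProcess {Ω : Type} [MeasurableSpace Ω] {d : ℕ} (P : Measure Ω)
    (Y : ℝ → Ω → Euc d) (A : Matrix (Fin d) (Fin d) ℝ) (b : Euc d)
    (ν : Measure (Euc d)) : Prop :=
  IsLevyLike P Y ∧ HasCharExponent P Y (levyExponent d A b ν)

/-- First exit time from `B` of a process `W` (which carries its own starting point). -/
def exitTimeW {Ω : Type} {d : ℕ} (W : ℝ → Ω → Euc d) (B : Set (Euc d)) (ω : Ω) : ℝ≥0∞ :=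
  sInf (ENNReal.ofReal '' {t : ℝ | 0 ≤ t ∧ W t ω ∉ B})

/-- `W` is a Brownian motion on `ℝ^d` with generator `Δ` started at `x`:
`W_0 = x` a.s., continuous sample paths, stationary independent increments, and
`E[exp(i⟪u, W_t − W_0⟫)] = exp(−t|u|²)`. -/
def IsBM {Ω : Type} [MeasurableSpace Ω] {d : ℕ} (P : Measure Ω) (W : ℝ → Ω → Euc d)
    (x : Euc d) : Prop :=
  IsProbabilityMeasure P ∧ (∀ t : ℝ, Measurable (W t)) ∧ (∀ᵐ ω ∂P, W 0 ω = x) ∧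
    (∀ᵐ ω ∂P, ContinuousOn (fun t => W t ω) (Ici 0)) ∧
    (∀ s t : ℝ, 0 ≤ s → s ≤ t →
      P.map (fun ω => W t ω - W s ω) = P.map (fun ω => W (t - s) ω - W 0 ω)) ∧
    (∀ n : ℕ, ∀ τ : Fin (n + 1) → ℝ, Monotone τ → 0 ≤ τ 0 →
      iIndepFun
        (fun i : Fin n => fun ω => W (τ i.succ) ω - W (τ i.castSucc) ω) P) ∧
    ∀ u : Euc d, ∀ t : ℝ, 0 ≤ t →
      ∫ ω, Complex.exp (Complex.I * (⟪u, W t ω - W 0 ω⟫ : ℂ)) ∂P =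
        Complex.exp (((-(t * ‖u‖ ^ 2)) : ℝ) : ℂ)

/-- The rescaled function `f_{z₀,r}(y) = f((y − z₀)/r)`. -/
def rescale {d : ℕ} (f : Euc d → ℝ) (z₀ : Euc d) (r : ℝ) : Euc d → ℝ :=
  fun w => f (r⁻¹ • (w - z₀))

/-!
Multiplying `r` by `c ≥ 1` changes each term of `Φ` by a controlled factor. The Gaussian term
scales exactly by `c⁻²`. The truncated second moment `∫ (‖z‖²/r² ∧ 1) dν` is antitone in `r`
and drops by at most the factor `c²`. The drifts `b̃_r` and `b̃_{cr}` differ by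
`∫_{r<‖z‖≤cr} z dν`, of norm at most `cr · ν(‖z‖ > r)`, and `ν(‖z‖ > r)` is at most the truncated
second moment at `r`, and at most `c²` times the one at `cr`.
-/

theorem integral_min_sq_div_nonneg {E : Type*} [NormedAddCommGroup E] [MeasurableSpace E]
    {ν : Measure E} (R : ℝ) : 0 ≤ ∫ z, min (‖z‖ ^ 2 / R ^ 2) 1 ∂ν :=
  integral_nonneg fun _ => by positivity

section TruncatedSecondMoment

variable {E : Type*} [NormedAddCommGroup E] [MeasurableSpace E] [OpensMeasurableSpace E]
  {ν : Measure E}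

theorem integrable_min_sq_div (hν : Integrable (fun z : E => min (‖z‖ ^ 2) 1) ν) (R : ℝ) :
    Integrable (fun z : E => min (‖z‖ ^ 2 / R ^ 2) 1) ν := by
  refine (hν.const_mul (max (R ^ 2)⁻¹ 1)).mono'
    (((measurable_norm.pow_const 2).div_const _).min measurable_const).aestronglyMeasurable
    (ae_of_all _ fun z => ?_)
  rw [Real.norm_of_nonneg (by positivity), mul_min_of_nonneg _ _ (by positivity), mul_one,
    div_eq_inv_mul]
  gcongr
  exacts [le_max_left _ _, le_max_right _ _]

theorem integral_min_sq_div_antitone (hν : Integrable (fun z : E => min (‖z‖ ^ 2) 1) ν)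
    {r s : ℝ} (hr : 0 < r) (hrs : r ≤ s) :
    ∫ z, min (‖z‖ ^ 2 / s ^ 2) 1 ∂ν ≤ ∫ z, min (‖z‖ ^ 2 / r ^ 2) 1 ∂ν :=
  integral_mono (integrable_min_sq_div hν s) (integrable_min_sq_div hν r) fun _ => by
    gcongr

theorem integral_min_sq_div_le_mul (hν : Integrable (fun z : E => min (‖z‖ ^ 2) 1) ν)
    {c : ℝ} (hc : 1 ≤ c) (r : ℝ) :
    ∫ z, min (‖z‖ ^ 2 / r ^ 2) 1 ∂ν ≤ c ^ 2 * ∫ z, min (‖z‖ ^ 2 / (c * r) ^ 2) 1 ∂ν := by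
  have hc2 : 1 ≤ c ^ 2 := one_le_pow₀ hc
  rw [← integral_const_mul]
  refine integral_mono (integrable_min_sq_div hν r) ((integrable_min_sq_div hν _).const_mul _)
    fun z => ?_
  rw [mul_min_of_nonneg _ _ (by positivity), mul_one, ← mul_div_assoc, mul_pow,
    mul_div_mul_left _ _ (by positivity)]
  exact min_le_min le_rfl hc2

theorem measure_norm_gt_lt_top (hν : Integrable (fun z : E => min (‖z‖ ^ 2) 1) ν) {r : ℝ}
    (hr : 0 < r) : ν {z | r < ‖z‖} < ⊤ := by
  have hsub : {z : E | r < ‖z‖} ⊆ {z | 1 ≤ min (‖z‖ ^ 2 / r ^ 2) 1} := fun z (hz : r < ‖z‖) =>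
    le_min ((one_le_div (pow_pos hr 2)).mpr (pow_le_pow_left₀ hr.le hz.le 2)) le_rfl
  exact (measure_mono hsub).trans_lt ((integrable_min_sq_div hν r).measure_ge_lt_top one_pos)

theorem measureReal_norm_gt_le (hν : Integrable (fun z : E => min (‖z‖ ^ 2) 1) ν) {r R : ℝ}
    (hr : 0 < r) (hrR : r ≤ R) :
    ν.real {z | r < ‖z‖} ≤ (R / r) ^ 2 * ∫ z, min (‖z‖ ^ 2 / R ^ 2) 1 ∂ν := by
  have hR : 0 < R := hr.trans_le hrR
  set ε := (r / R) ^ 2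
  have hε : 0 < ε := by positivity
  have hεinv : (R / r) ^ 2 * ε = 1 := by
    rw [← mul_pow, div_mul_div_comm, mul_comm R r, div_self (by positivity), one_pow]
  have hsub : {z : E | r < ‖z‖} ⊆ {z | ε ≤ min (‖z‖ ^ 2 / R ^ 2) 1} := fun z (hz : r < ‖z‖) =>
    le_min (by rw [div_pow]; gcongr) (pow_le_one₀ (by positivity) ((div_le_one hR).mpr hrR))
  calc ν.real {z | r < ‖z‖} = (R / r) ^ 2 * (ε * ν.real {z | r < ‖z‖}) := by
        rw [← mul_assoc, hεinv, one_mul]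
    _ ≤ (R / r) ^ 2 * (ε * ν.real {z | ε ≤ min (‖z‖ ^ 2 / R ^ 2) 1}) := by
        gcongr
        exact ((integrable_min_sq_div hν R).measure_ge_lt_top hε).ne
    _ ≤ (R / r) ^ 2 * ∫ z, min (‖z‖ ^ 2 / R ^ 2) 1 ∂ν := by
        gcongr
        exact mul_meas_ge_le_integral_of_nonneg (ae_of_all _ fun _ => by positivity)
          (integrable_min_sq_div hν R) ε

end TruncatedSecondMoment

section Annulus

variable {E : Type*} [NormedAddCommGroup E] [MeasurableSpace E] [BorelSpace E]
  [SecondCountableTopology E] {ν : Measure E}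

theorem integrableOn_annulus (hν : Integrable (fun z : E => min (‖z‖ ^ 2) 1) ν) {r : ℝ}
    (hr : 0 < r) (s : ℝ) : IntegrableOn (fun z : E => z) {z | r < ‖z‖ ∧ ‖z‖ ≤ s} ν :=
  Measure.integrableOn_of_bounded
    ((measure_mono fun _ hz => hz.1).trans_lt (measure_norm_gt_lt_top hν hr)).ne
    aestronglyMeasurable_id
    (ae_restrict_of_forall_mem (measurable_norm measurableSet_Ioc) fun _ hz => hz.2)

theorem setIntegral_annulus_eq_add [NormedSpace ℝ E]
    (hν : Integrable (fun z : E => min (‖z‖ ^ 2) 1) ν) {r s t : ℝ} (hr : 0 < r) (hrs : r ≤ s)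
    (hst : s ≤ t) :
    ∫ z in {z : E | r < ‖z‖ ∧ ‖z‖ ≤ t}, z ∂ν =
      (∫ z in {z : E | r < ‖z‖ ∧ ‖z‖ ≤ s}, z ∂ν) + ∫ z in {z : E | s < ‖z‖ ∧ ‖z‖ ≤ t}, z ∂ν := by
  have hunion : {z : E | r < ‖z‖ ∧ ‖z‖ ≤ t} =
      {z : E | r < ‖z‖ ∧ ‖z‖ ≤ s} ∪ {z | s < ‖z‖ ∧ ‖z‖ ≤ t} :=
    congrArg (norm ⁻¹' ·) (Ioc_union_Ioc_eq_Ioc hrs hst).symm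
  have hdisj : Disjoint {z : E | r < ‖z‖ ∧ ‖z‖ ≤ s} {z | s < ‖z‖ ∧ ‖z‖ ≤ t} :=
    (Ioc_disjoint_Ioc_of_le le_rfl).preimage _
  rw [hunion, setIntegral_union hdisj
    (measurable_norm measurableSet_Ioc) (integrableOn_annulus hν hr s)
    (integrableOn_annulus hν (hr.trans_le hrs) t)]

end Annulus

section Pruitt

variable {d : ℕ} {A : Matrix (Fin d) (Fin d) ℝ} {b : Euc d} {ν : Measure (Euc d)} {r s c : ℝ}

theorem IsLevyTriple.trace_nonneg (hT : IsLevyTriple d A b ν) : 0 ≤ ∑ i, A i i :=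
  Finset.sum_nonneg fun i _ => by
    simpa [quadForm, PiLp.single_apply] using hT.2.1 (EuclideanSpace.single i 1)

theorem IsLevyTriple.integrable_min_sq (hT : IsLevyTriple d A b ν) :
    Integrable (fun z : Euc d => min (‖z‖ ^ 2) 1) ν :=
  ⟨((measurable_norm.pow_const 2).min measurable_const).aestronglyMeasurable,
    (hasFiniteIntegral_iff_ofReal (ae_of_all _ fun _ => by positivity)).mpr hT.2.2.2⟩

theorem btilde_eq_add_setIntegral (hν : Integrable (fun z : Euc d => min (‖z‖ ^ 2) 1) ν)
    (hr : 0 < r) (hrs : r ≤ s) :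
    btilde b ν s = btilde b ν r + ∫ z in {z : Euc d | r < ‖z‖ ∧ ‖z‖ ≤ s}, z ∂ν := by
  unfold btilde
  rcases le_or_gt s 1 with hs1 | hs1
  · rw [if_pos hs1, if_pos (hrs.trans hs1), setIntegral_annulus_eq_add hν hr hrs hs1]
    abel
  rcases le_or_gt r 1 with hr1 | hr1
  · rw [if_neg hs1.not_ge, if_pos hr1, setIntegral_annulus_eq_add hν hr hr1 hs1.le]
    abel
  · rw [if_neg hs1.not_ge, if_neg hr1.not_ge, setIntegral_annulus_eq_add hν one_pos hr1.le hrs]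
    abel

theorem norm_btilde_sub_le (hν : Integrable (fun z : Euc d => min (‖z‖ ^ 2) 1) ν)
    (hr : 0 < r) (hrs : r ≤ s) :
    ‖btilde b ν s - btilde b ν r‖ ≤ s * ν.real {z | r < ‖z‖} := by
  have htail := measure_norm_gt_lt_top hν hr
  rw [btilde_eq_add_setIntegral hν hr hrs, add_sub_cancel_left]
  calc _ ≤ s * ν.real {z : Euc d | r < ‖z‖ ∧ ‖z‖ ≤ s} :=
        norm_setIntegral_le_of_norm_le_const
          ((measure_mono (s := {z : Euc d | r < ‖z‖ ∧ ‖z‖ ≤ s}) fun _ hz => hz.1).trans_lt htail)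
          fun _ hz => hz.2
    _ ≤ s * ν.real {z | r < ‖z‖} :=
        mul_le_mul_of_nonneg_left (measureReal_mono (fun _ hz => hz.1) htail.ne) (hr.le.trans hrs)

theorem Phi_nonneg (hT : IsLevyTriple d A b ν) (hr : 0 < r) : 0 ≤ Phi d A b ν r := by
  have := hT.trace_nonneg
  have := integral_min_sq_div_nonneg (ν := ν) r
  unfold Phi
  positivity

theorem Phi_le_two_mul_of_le (hT : IsLevyTriple d A b ν) (hr : 0 < r) (hrs : r ≤ s) :
    Phi d A b ν s ≤ 2 * Phi d A b ν r := by
  have hν := hT.integrable_min_sq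
  have hs : 0 < s := hr.trans_le hrs
  set a := ∑ i, A i i
  set N := ν.real {z | r < ‖z‖}
  have ha : 0 ≤ a := hT.trace_nonneg
  have hgauss : a / s ^ 2 ≤ a / r ^ 2 := by gcongr
  have hmoment := integral_min_sq_div_antitone hν hr hrs
  have htail : N ≤ ∫ z, min (‖z‖ ^ 2 / r ^ 2) 1 ∂ν := by
    simpa [div_self hr.ne'] using measureReal_norm_gt_le hν hr le_rfl
  have hdrift : ‖btilde b ν s‖ / s ≤ ‖btilde b ν r‖ / r + N :=
    calc ‖btilde b ν s‖ / s ≤ (‖btilde b ν r‖ + s * N) / s := by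
          gcongr
          refine (norm_le_norm_add_norm_sub' _ (btilde b ν r)).trans ?_
          gcongr
          exact norm_btilde_sub_le hν hr hrs
      _ = ‖btilde b ν r‖ / s + N := by field_simp
      _ ≤ ‖btilde b ν r‖ / r + N := by gcongr
  have : 0 ≤ a / r ^ 2 + ‖btilde b ν r‖ / r := by positivity
  unfold Phi
  linarith

theorem Phi_le_two_mul_pow_three_mul (hT : IsLevyTriple d A b ν) (hr : 0 < r) (hc : 1 ≤ c) :
    Phi d A b ν r ≤ 2 * c ^ 3 * Phi d A b ν (c * r) := by
  have hν := hT.integrable_min_sq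
  have hc0 : 0 < c := one_pos.trans_le hc
  have hcr : r ≤ c * r := le_mul_of_one_le_left hr.le hc
  set a := ∑ i, A i i
  set I := ∫ z, min (‖z‖ ^ 2 / (c * r) ^ 2) 1 ∂ν
  set B := ‖btilde b ν (c * r)‖ / (c * r)
  set N := ν.real {z | r < ‖z‖}
  have ha : 0 ≤ a / (c * r) ^ 2 := div_nonneg hT.trace_nonneg (by positivity)
  have hI : 0 ≤ I := integral_min_sq_div_nonneg _
  have hB : 0 ≤ B := by positivity
  have hgauss : a / r ^ 2 = c ^ 2 * (a / (c * r) ^ 2) := by field_simp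
  have hmoment : ∫ z, min (‖z‖ ^ 2 / r ^ 2) 1 ∂ν ≤ c ^ 2 * I := integral_min_sq_div_le_mul hν hc r
  have htail : N ≤ c ^ 2 * I := by
    simpa [mul_div_assoc, div_self hr.ne'] using measureReal_norm_gt_le hν hr hcr
  have hdrift : ‖btilde b ν r‖ / r ≤ c * B + c * N :=
    calc ‖btilde b ν r‖ / r ≤ (‖btilde b ν (c * r)‖ + c * r * N) / r := by
          gcongr
          refine (norm_le_norm_add_norm_sub' _ (btilde b ν (c * r))).trans ?_
          rw [norm_sub_rev]
          gcongr
          exact norm_btilde_sub_le hν hr hcr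
      _ = c * B + c * N := by simp only [B]; field_simp
  have hc2 : c ^ 2 ≤ 2 * c ^ 3 := by nlinarith
  have hc3 : c ^ 2 + c ^ 3 ≤ 2 * c ^ 3 := by nlinarith
  have hc1 : c ≤ 2 * c ^ 3 := by nlinarith
  have := mul_le_mul_of_nonneg_right hc2 ha
  have := mul_le_mul_of_nonneg_right hc3 hI
  have := mul_le_mul_of_nonneg_right hc1 hB
  have := mul_le_mul_of_nonneg_left htail hc0.le
  unfold Phi
  linarith

end Pruitt

/-- Remark 2.5: for every `c₁ > 1` there is `c₂ > 1`, depending only on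
`c₁`, with `c₂⁻¹ Φ(r) ≤ Φ(c₁ r) ≤ c₂ Φ(r)` for every Lévy triple and every `r > 0`. -/
theorem phi_scaling
    (c₁ : ℝ) (hc₁ : 1 < c₁) :
    ∃ c₂ : ℝ, 1 < c₂ ∧
      ∀ (d : ℕ), 1 ≤ d →
      ∀ (A : Matrix (Fin d) (Fin d) ℝ) (b : Euc d) (ν : Measure (Euc d)),
        IsLevyTriple d A b ν →
        ∀ r : ℝ, 0 < r →
          c₂⁻¹ * Phi d A b ν r ≤ Phi d A b ν (c₁ * r) ∧
            Phi d A b ν (c₁ * r) ≤ c₂ * Phi d A b ν r := by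
  have hc₂ : 2 ≤ 2 * c₁ ^ 3 := by nlinarith [one_le_pow₀ (n := 3) hc₁.le]
  refine ⟨2 * c₁ ^ 3, by linarith, fun d _ A b ν hT r hr => ⟨?_, ?_⟩⟩
  · rw [inv_mul_le_iff₀ (by linarith)]
    exact Phi_le_two_mul_pow_three_mul hT hr hc₁.le
  · calc Phi d A b ν (c₁ * r) ≤ 2 * Phi d A b ν r :=
          Phi_le_two_mul_of_le hT hr (le_mul_of_one_le_left hr.le hc₁.le)
      _ ≤ 2 * c₁ ^ 3 * Phi d A b ν r := by gcongr; exact Phi_nonneg hT hr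

end
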